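/- arXiv:1508.05743 — 2 statements merged into one kernel-verified Lean document; each statement's English description precedes it below -/
import Mathlib

section
/- Let V be a complex vector space with a T-family T. Then for every integer k ≥ 2 and all r, s, u₁,…,u_k ∈ Γ: ⁅T(r), Δ_k(s; u₁,…,u_k)⁆ = det(s+u₁+⋯+u_k, r)·Δ_{k+1}(s; u₁,…,u_k, r) + Σ_{i=1}^{k} det(r,u_i)·Δ_k(s; u₁,…,û_i,…,u_k, r), where û_i means u_i is omitted from the list. -/
/-- `det(r,s) = r₁s₂ − r₂s₁` on `Γ = ℤ×ℤ`. -/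
def Gdet (r s : ℤ × ℤ) : ℤ := r.1 * s.2 - r.2 * s.1

/-- A T-family on a complex vector space `V`: `T 0 = 0` and
`⁅T r, T s⁆ = det(r,s)·(T(r+s) − T r − T s)`. -/
def IsTFamily {V : Type*} [AddCommGroup V] [Module ℂ V]
    (T : ℤ × ℤ → Module.End ℂ V) : Prop :=
  T 0 = 0 ∧ ∀ r s : ℤ × ℤ, ⁅T r, T s⁆ = (Gdet r s : ℂ) • (T (r + s) - T r - T s)

/-- The `k`-th order difference `Δ_k(r; u₁,…,u_k) = Σ_{S ⊆ {1,…,k}} (−1)^{|S|} T(r + Σ_{i∈S} uᵢ)`. -/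
noncomputable def Δ {V : Type*} [AddCommGroup V] [Module ℂ V]
    (T : ℤ × ℤ → Module.End ℂ V) (k : ℕ) (r : ℤ × ℤ) (u : Fin k → ℤ × ℤ) :
    Module.End ℂ V :=
  ∑ S : Finset (Fin k), ((-1 : ℂ) ^ S.card) • T (r + ∑ i ∈ S, u i)

/-- `V` is `T`-simple: the only subspaces invariant under every `T r` are `0` and `V`. -/
def IsTSimple {V : Type*} [AddCommGroup V] [Module ℂ V]
    (T : ℤ × ℤ → Module.End ℂ V) : Prop :=
  ∀ W : Submodule ℂ V, (∀ r : ℤ × ℤ, ∀ v ∈ W, T r v ∈ W) → W = ⊥ ∨ W = ⊤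

open Finset

lemma Gdet_add_right (r a b : ℤ × ℤ) : Gdet r (a + b) = Gdet r a + Gdet r b := by
  simp only [Gdet, Prod.fst_add, Prod.snd_add]; ring

lemma Gdet_sum_right {α : Type*} (r : ℤ × ℤ) (S : Finset α) (f : α → ℤ × ℤ) :
    Gdet r (∑ i ∈ S, f i) = ∑ i ∈ S, Gdet r (f i) := by
  classical
  induction S using Finset.cons_induction with
  | empty => simp [Gdet]
  | cons a s ha ih => rw [Finset.sum_cons, Finset.sum_cons, Gdet_add_right, ih]

lemma Gdet_skew (r s : ℤ × ℤ) : Gdet s r = - Gdet r s := by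
  simp only [Gdet]; ring

lemma sum_pw_c {α : Type*} [DecidableEq α] (x : Finset α) (hx : x.Nonempty) :
    ∑ m ∈ x.powerset, ((-1 : ℂ)) ^ m.card = 0 := by
  have h := congrArg (Int.cast : ℤ → ℂ)
    (Finset.sum_powerset_neg_one_pow_card_of_nonempty hx)
  push_cast at h
  simpa using h

lemma sum_c (k : ℕ) (hk : 1 ≤ k) :
    ∑ S : Finset (Fin k), ((-1 : ℂ)) ^ S.card = 0 := by
  have hne : (univ : Finset (Fin k)).Nonempty := ⟨⟨0, hk⟩, mem_univ _⟩
  have h := sum_pw_c (univ : Finset (Fin k)) hne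
  rwa [Finset.powerset_univ] at h

lemma erase_univ_nonempty (k : ℕ) (hk : 2 ≤ k) (i : Fin k) :
    ((univ : Finset (Fin k)).erase i).Nonempty := by
  rw [← Finset.card_pos, Finset.card_erase_of_mem (mem_univ i), Finset.card_univ,
    Fintype.card_fin]
  omega

lemma sum_c_mem (k : ℕ) (hk : 2 ≤ k) (i : Fin k) :
    ∑ S : Finset (Fin k), (if i ∈ S then ((-1 : ℂ)) ^ S.card else 0) = 0 := by
  classical
  rw [← Finset.powerset_univ,
    show (univ : Finset (Fin k)) = insert i (univ.erase i) from
      (Finset.insert_erase (mem_univ i)).symm,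
    Finset.sum_powerset_insert (Finset.notMem_erase i univ)]
  have h1 : ∑ t ∈ ((univ : Finset (Fin k)).erase i).powerset,
      (if i ∈ t then ((-1 : ℂ)) ^ t.card else 0) = 0 := by
    apply Finset.sum_eq_zero
    intro t ht
    rw [if_neg]
    intro hit
    exact (Finset.notMem_erase i univ) (Finset.mem_powerset.mp ht hit)
  rw [h1, zero_add]
  have h2 : ∀ t ∈ ((univ : Finset (Fin k)).erase i).powerset,
      (if i ∈ insert i t then ((-1 : ℂ)) ^ (insert i t).card else 0)
        = -((-1 : ℂ)) ^ t.card := by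
    intro t ht
    have hit : i ∉ t := fun h => (Finset.notMem_erase i univ) (Finset.mem_powerset.mp ht h)
    rw [if_pos (mem_insert_self i t), Finset.card_insert_of_notMem hit, pow_succ]
    ring
  rw [Finset.sum_congr rfl h2, Finset.sum_neg_distrib,
    sum_pw_c _ (erase_univ_nonempty k hk i), neg_zero]

lemma powerset_map' {α β : Type*} (f : α ↪ β) (s : Finset α) :
    (s.map f).powerset = s.powerset.map ⟨Finset.map f, Finset.map_injective f⟩ := by
  classical
  ext t
  simp only [Finset.mem_powerset, Finset.mem_map, Function.Embedding.coeFn_mk]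
  constructor
  · intro ht
    refine ⟨s.filter (fun a => f a ∈ t), Finset.filter_subset _ _, ?_⟩
    ext b
    simp only [Finset.mem_map, Finset.mem_filter]
    constructor
    · rintro ⟨a, ⟨_, h⟩, rfl⟩; exact h
    · intro hb
      obtain ⟨a, ha, rfl⟩ := Finset.mem_map.mp (ht hb)
      exact ⟨a, ⟨ha, hb⟩, rfl⟩
  · rintro ⟨u, hu, rfl⟩
    exact Finset.map_subset_map.mpr hu

lemma delta_snoc {V : Type*} [AddCommGroup V] [Module ℂ V]
    (T : ℤ × ℤ → Module.End ℂ V) (k : ℕ) (s r : ℤ × ℤ) (u : Fin k → ℤ × ℤ) :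
    Δ T (k + 1) s (Fin.snoc u r)
      = (∑ S : Finset (Fin k), ((-1 : ℂ)) ^ S.card • T (s + ∑ i ∈ S, u i))
        - ∑ S : Finset (Fin k), ((-1 : ℂ)) ^ S.card • T (r + s + ∑ i ∈ S, u i) := by
  classical
  unfold Δ
  rw [← Finset.powerset_univ (α := Fin (k + 1)), Fin.univ_castSuccEmb,
    Finset.cons_eq_insert,
    Finset.sum_powerset_insert (by simp [Finset.map_eq_image])]
  have hmap : ∀ t : Finset (Fin k),
      (∑ j ∈ t.map Fin.castSuccEmb, (Fin.snoc u r : Fin (k+1) → ℤ × ℤ) j) = ∑ i ∈ t, u i := by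
    intro t
    rw [Finset.sum_map]
    exact Finset.sum_congr rfl fun i _ => by
      rw [show (Fin.castSuccEmb i : Fin (k+1)) = Fin.castSucc i from rfl, Fin.snoc_castSucc]
  have h1 : ∑ t ∈ ((univ : Finset (Fin k)).map Fin.castSuccEmb).powerset,
        ((-1 : ℂ)) ^ t.card • T (s + ∑ j ∈ t, (Fin.snoc u r : Fin (k+1) → ℤ × ℤ) j)
      = ∑ S : Finset (Fin k), ((-1 : ℂ)) ^ S.card • T (s + ∑ i ∈ S, u i) := by
    rw [powerset_map', Finset.sum_map, Finset.powerset_univ]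
    refine Finset.sum_congr rfl fun t _ => ?_
    simp only [Function.Embedding.coeFn_mk]
    rw [Finset.card_map, hmap]
  have h2 : ∑ t ∈ ((univ : Finset (Fin k)).map Fin.castSuccEmb).powerset,
        ((-1 : ℂ)) ^ (insert (Fin.last k) t).card •
          T (s + ∑ j ∈ insert (Fin.last k) t, (Fin.snoc u r : Fin (k+1) → ℤ × ℤ) j)
      = -∑ S : Finset (Fin k), ((-1 : ℂ)) ^ S.card • T (r + s + ∑ i ∈ S, u i) := by
    rw [← Finset.sum_neg_distrib, powerset_map', Finset.sum_map, Finset.powerset_univ]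
    refine Finset.sum_congr rfl fun t _ => ?_
    simp only [Function.Embedding.coeFn_mk]
    have hl : Fin.last k ∉ t.map Fin.castSuccEmb := by
      simp only [Finset.mem_map, not_exists]
      intro a h
      exact absurd h.2 (Fin.castSucc_lt_last a).ne
    rw [Finset.card_insert_of_notMem hl, Finset.card_map, Finset.sum_insert hl, hmap,
      Fin.snoc_last,
      show s + (r + ∑ i ∈ t, u i) = r + s + ∑ i ∈ t, u i from by abel,
      pow_succ, mul_comm, mul_smul, neg_one_smul]
  rw [h1, h2, sub_eq_add_neg]

lemma delta_update {V : Type*} [AddCommGroup V] [Module ℂ V]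
    (T : ℤ × ℤ → Module.End ℂ V) (k : ℕ) (s r : ℤ × ℤ) (u : Fin k → ℤ × ℤ) (i : Fin k) :
    Δ T k s (Function.update u i r)
      = ∑ S ∈ ((univ : Finset (Fin k)).erase i).powerset,
          ((-1 : ℂ)) ^ S.card •
            (T (s + ∑ j ∈ S, u j) - T (r + s + ∑ j ∈ S, u j)) := by
  classical
  unfold Δ
  conv_lhs => rw [← Finset.powerset_univ,
    show (univ : Finset (Fin k)) = insert i (univ.erase i) from
      (Finset.insert_erase (mem_univ i)).symm,
    Finset.sum_powerset_insert (Finset.notMem_erase i univ)]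
  have key : ∀ t ∈ ((univ : Finset (Fin k)).erase i).powerset, i ∉ t := by
    intro t ht hit
    exact (Finset.notMem_erase i univ) (Finset.mem_powerset.mp ht hit)
  have h1 : ∀ t ∈ ((univ : Finset (Fin k)).erase i).powerset,
      ((-1 : ℂ)) ^ t.card • T (s + ∑ j ∈ t, Function.update u i r j)
        = ((-1 : ℂ)) ^ t.card • T (s + ∑ j ∈ t, u j) := by
    intro t ht
    have : (∑ j ∈ t, Function.update u i r j) = ∑ j ∈ t, u j :=
      Finset.sum_congr rfl fun j hj =>
        Function.update_of_ne (fun h : j = i => key t ht (h ▸ hj)) r u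
    rw [this]
  have h2 : ∀ t ∈ ((univ : Finset (Fin k)).erase i).powerset,
      ((-1 : ℂ)) ^ (insert i t).card • T (s + ∑ j ∈ insert i t, Function.update u i r j)
        = -(((-1 : ℂ)) ^ t.card • T (r + s + ∑ j ∈ t, u j)) := by
    intro t ht
    have hit : i ∉ t := key t ht
    rw [Finset.card_insert_of_notMem hit, Finset.sum_insert hit, Function.update_self,
      show (∑ j ∈ t, Function.update u i r j) = ∑ j ∈ t, u j from
        Finset.sum_congr rfl fun j hj =>
          Function.update_of_ne (fun h : j = i => hit (h ▸ hj)) r u,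
      show s + (r + ∑ j ∈ t, u j) = r + s + ∑ j ∈ t, u j from by abel,
      pow_succ, mul_comm, mul_smul, neg_one_smul]
  rw [Finset.sum_congr rfl h1, Finset.sum_congr rfl h2, ← Finset.sum_add_distrib]
  refine Finset.sum_congr rfl fun t _ => ?_
  rw [smul_sub, sub_eq_add_neg]

/-- commutator formula
`⁅T r, Δ_k(s; u₁,…,u_k)⁆ = det(s+u₁+⋯+u_k, r)·Δ_{k+1}(s; u₁,…,u_k, r)
  + Σᵢ det(r,uᵢ)·Δ_k(s; u₁,…,ûᵢ,…,u_k, r)`.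
Here the list `u₁,…,ûᵢ,…,u_k, r` (with `uᵢ` omitted and `r` appended) is
realized, up to a permutation (under which `Δ_k` is invariant), as
`Function.update u i r`. -/
theorem stmt8 {V : Type*} [AddCommGroup V] [Module ℂ V]
    (T : ℤ × ℤ → Module.End ℂ V) (hT : IsTFamily T)
    (k : ℕ) (hk : 2 ≤ k) (r s : ℤ × ℤ) (u : Fin k → ℤ × ℤ) :
    ⁅T r, Δ T k s u⁆
      = (Gdet (s + ∑ i : Fin k, u i) r : ℂ) • Δ T (k + 1) s (Fin.snoc u r)
        + ∑ i : Fin k, (Gdet r (u i) : ℂ) • Δ T k s (Function.update u i r) := by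
  classical
  obtain ⟨-, hbr⟩ := hT
  -- scalar sum vanishing
  have hzero : ∑ S : Finset (Fin k),
      ((-1 : ℂ)) ^ S.card * ((Gdet r (s + ∑ i ∈ S, u i) : ℤ) : ℂ) = 0 := by
    have hexp : ∀ S : Finset (Fin k),
        ((Gdet r (s + ∑ i ∈ S, u i) : ℤ) : ℂ)
          = ((Gdet r s : ℤ) : ℂ)
            + ∑ j : Fin k, (if j ∈ S then ((Gdet r (u j) : ℤ) : ℂ) else 0) := by
      intro S
      rw [Gdet_add_right, Gdet_sum_right]
      push_cast
      rw [Finset.sum_ite_mem, Finset.univ_inter]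
    simp only [hexp, mul_add, Finset.sum_add_distrib, Finset.mul_sum]
    have e1 : ∑ S : Finset (Fin k), ((-1 : ℂ)) ^ S.card * ((Gdet r s : ℤ) : ℂ) = 0 := by
      rw [← Finset.sum_mul, sum_c k (le_trans one_le_two hk), zero_mul]
    rw [e1, zero_add, Finset.sum_comm]
    apply Finset.sum_eq_zero
    intro j _
    have hsw : ∀ S : Finset (Fin k),
        ((-1 : ℂ)) ^ S.card * (if j ∈ S then ((Gdet r (u j) : ℤ) : ℂ) else 0)
          = ((Gdet r (u j) : ℤ) : ℂ) * (if j ∈ S then ((-1 : ℂ)) ^ S.card else 0) := by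
      intro S; split <;> ring
    simp only [hsw]
    rw [← Finset.mul_sum, sum_c_mem k hk j, mul_zero]
  -- LHS
  have hL : ⁅T r, Δ T k s u⁆
      = ∑ S : Finset (Fin k),
          (((-1 : ℂ)) ^ S.card * ((Gdet r (s + ∑ i ∈ S, u i) : ℤ) : ℂ)) •
            (T (r + s + ∑ i ∈ S, u i) - T (s + ∑ i ∈ S, u i)) := by
    unfold Δ
    rw [show ⁅T r, ∑ S : Finset (Fin k), ((-1 : ℂ)) ^ S.card • T (s + ∑ i ∈ S, u i)⁆
        = ∑ S : Finset (Fin k), ⁅T r, ((-1 : ℂ)) ^ S.card • T (s + ∑ i ∈ S, u i)⁆ from by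
      simp only [Ring.lie_def, Finset.mul_sum, Finset.sum_mul, ← Finset.sum_sub_distrib]]
    have hterm : ∀ S : Finset (Fin k),
        ⁅T r, ((-1 : ℂ)) ^ S.card • T (s + ∑ i ∈ S, u i)⁆
          = (((-1 : ℂ)) ^ S.card * ((Gdet r (s + ∑ i ∈ S, u i) : ℤ) : ℂ)) •
              (T (r + s + ∑ i ∈ S, u i) - T (s + ∑ i ∈ S, u i))
            - (((-1 : ℂ)) ^ S.card * ((Gdet r (s + ∑ i ∈ S, u i) : ℤ) : ℂ)) • T r := by
      intro S
      rw [show ⁅T r, ((-1 : ℂ)) ^ S.card • T (s + ∑ i ∈ S, u i)⁆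
          = ((-1 : ℂ)) ^ S.card • ⁅T r, T (s + ∑ i ∈ S, u i)⁆ from by
            rw [Ring.lie_def, Ring.lie_def, mul_smul_comm, smul_mul_assoc, smul_sub], hbr,
        show r + (s + ∑ i ∈ S, u i) = r + s + ∑ i ∈ S, u i from by abel]
      module
    rw [Finset.sum_congr rfl fun S _ => hterm S, Finset.sum_sub_distrib,
      ← Finset.sum_smul, hzero, zero_smul, sub_zero]
  rw [hL, delta_snoc]
  -- first term of RHS
  have hfst : (Gdet (s + ∑ i : Fin k, u i) r : ℂ) •
        ((∑ S : Finset (Fin k), ((-1 : ℂ)) ^ S.card • T (s + ∑ i ∈ S, u i))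
          - ∑ S : Finset (Fin k), ((-1 : ℂ)) ^ S.card • T (r + s + ∑ i ∈ S, u i))
      = ∑ S : Finset (Fin k),
          (((-1 : ℂ)) ^ S.card * ((Gdet r (s + ∑ i : Fin k, u i) : ℤ) : ℂ)) •
            (T (r + s + ∑ i ∈ S, u i) - T (s + ∑ i ∈ S, u i)) := by
    have hskew : ((Gdet (s + ∑ i : Fin k, u i) r : ℤ) : ℂ)
        = -((Gdet r (s + ∑ i : Fin k, u i) : ℤ) : ℂ) := by
      rw [Gdet_skew]; push_cast; ring
    rw [hskew, ← Finset.sum_sub_distrib, Finset.smul_sum]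
    refine Finset.sum_congr rfl fun S _ => ?_
    module
  rw [hfst]
  -- second term of RHS
  have hpw : ∀ i : Fin k, ((univ : Finset (Fin k)).erase i).powerset
      = Finset.univ.filter (fun S : Finset (Fin k) => i ∉ S) := by
    intro i
    ext S
    simp [Finset.mem_powerset, Finset.subset_erase]
  have hsnd : ∑ i : Fin k, (Gdet r (u i) : ℂ) • Δ T k s (Function.update u i r)
      = ∑ S : Finset (Fin k),
          (((-1 : ℂ)) ^ S.card *
              ∑ i : Fin k, (if i ∉ S then ((Gdet r (u i) : ℤ) : ℂ) else 0)) •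
            (T (s + ∑ j ∈ S, u j) - T (r + s + ∑ j ∈ S, u j)) := by
    rw [Finset.sum_congr rfl fun i _ => by rw [delta_update T k s r u i, hpw i]]
    simp only [Finset.sum_filter, Finset.smul_sum]
    rw [Finset.sum_comm]
    refine Finset.sum_congr rfl fun S _ => ?_
    rw [Finset.mul_sum, Finset.sum_smul]
    refine Finset.sum_congr rfl fun i _ => ?_
    by_cases h : i ∈ S
    · simp [h]
    · simp [h, smul_smul, mul_comm]
  rw [hsnd, ← Finset.sum_add_distrib]
  refine Finset.sum_congr rfl fun S _ => ?_
  have hid : ((Gdet r (s + ∑ i ∈ S, u i) : ℤ) : ℂ)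
      + (∑ i : Fin k, if i ∉ S then ((Gdet r (u i) : ℤ) : ℂ) else 0)
      = ((Gdet r (s + ∑ i : Fin k, u i) : ℤ) : ℂ) := by
    have h1 : (∑ i : Fin k, if i ∉ S then ((Gdet r (u i) : ℤ) : ℂ) else 0)
        = ∑ i ∈ Sᶜ, ((Gdet r (u i) : ℤ) : ℂ) := by
      simp only [← Finset.mem_compl (s := S)]
      rw [Finset.sum_ite_mem, Finset.univ_inter]
    rw [h1, Gdet_add_right, Gdet_add_right, Gdet_sum_right, Gdet_sum_right]
    push_cast
    rw [← Finset.sum_add_sum_compl S fun i => ((Gdet r (u i) : ℤ) : ℂ)]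
    ring
  rw [← hid]
  module
end

section
/- Let V be a complex vector space with a T-family T, and for k ≥ 2 let 𝔍_k ⊆ End_ℂ(V) be the ℂ-linear span of { Δ_k(r; u₁,…,u_k) : r, u₁,…,u_k ∈ Γ }. Then for every k ≥ 2: (i) 𝔍_{k+1} ⊆ 𝔍_k, and (ii) ⁅T(r), x⁆ ∈ 𝔍_k for every r ∈ Γ and every x ∈ 𝔍_k (so 𝔍_k is an ideal of the Lie algebra spanned by the T(r)). -/
section Aux
open Finset

-- general split lemma
lemma sum_split {α : Type*} [Fintype α] [DecidableEq α] {M : Type*} [AddCommMonoid M]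
    (a : α) (f : Finset α → M) :
    ∑ S : Finset α, f S
      = ∑ t ∈ (Finset.univ.erase a).powerset, (f t + f (insert a t)) := by
  rw [← Finset.powerset_univ]
  conv_lhs => rw [← Finset.insert_erase (Finset.mem_univ a)]
  rw [Finset.sum_powerset_insert (Finset.notMem_erase a _), Finset.sum_add_distrib]

lemma altsum {α : Type*} (s : Finset α) (hs : s.Nonempty) :
    ∑ t ∈ s.powerset, (-1 : ℂ) ^ t.card = 0 := by
  have h := Finset.sum_powerset_neg_one_pow_card_of_nonempty hs
  have h2 : ((∑ t ∈ s.powerset, (-1 : ℤ) ^ t.card : ℤ) : ℂ) = 0 := by rw [h]; norm_num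
  rw [← h2]; push_cast; rfl

lemma powerset_map_eq {α β : Type*} (f : α ↪ β) (s : Finset α) :
    (s.map f).powerset = s.powerset.map (Finset.mapEmbedding f).toEmbedding := by
  classical
  ext t
  simp only [Finset.mem_powerset, Finset.mem_map, RelEmbedding.coe_toEmbedding,
    Finset.mapEmbedding_apply]
  constructor
  · intro ht
    rw [Finset.map_eq_image] at ht
    obtain ⟨s', hs', h⟩ := Finset.subset_image_iff.mp ht
    exact ⟨s', hs', by rw [Finset.map_eq_image]; exact h⟩
  · rintro ⟨s', hs', rfl⟩
    exact Finset.map_subset_map.mpr hs'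

lemma sum_powerset_map {α β M : Type*} [AddCommMonoid M] (f : α ↪ β) (s : Finset α)
    (F : Finset β → M) :
    ∑ t ∈ (s.map f).powerset, F t = ∑ t ∈ s.powerset, F (t.map f) := by
  rw [powerset_map_eq, Finset.sum_map]
  exact Finset.sum_congr rfl fun x _ => by
    rw [RelEmbedding.coe_toEmbedding, Finset.mapEmbedding_apply]

lemma Delta_succ {V : Type*} [AddCommGroup V] [Module ℂ V]
    (T : ℤ × ℤ → Module.End ℂ V) (k : ℕ) (r : ℤ × ℤ) (u : Fin (k + 1) → ℤ × ℤ) :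
    Δ T (k + 1) r u
      = Δ T k r (u ∘ Fin.castSucc) - Δ T k (r + u (Fin.last k)) (u ∘ Fin.castSucc) := by
  classical
  rw [Δ, sum_split (Fin.last k)]
  have huniv : (Finset.univ : Finset (Fin (k + 1))).erase (Fin.last k)
      = Finset.univ.map Fin.castSuccEmb := by
    rw [Fin.univ_castSuccEmb]
    rw [Finset.erase_cons]
  rw [huniv, sum_powerset_map, Finset.powerset_univ]
  rw [Δ, Δ, ← Finset.sum_sub_distrib]
  refine Finset.sum_congr rfl fun S _ => ?_
  have hlast : Fin.last k ∉ S.map Fin.castSuccEmb := by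
    simp [Fin.castSuccEmb]
    intro x _
    exact Fin.castSucc_lt_last x |>.ne
  rw [Finset.sum_insert hlast, Finset.card_insert_of_notMem hlast, Finset.card_map,
    Finset.sum_map]
  have harg : r + (u (Fin.last k) + ∑ i ∈ S, u (Fin.castSuccEmb i))
      = r + u (Fin.last k) + ∑ i ∈ S, (u ∘ Fin.castSucc) i := by
    rw [add_assoc]
    congr 1
  rw [harg, pow_succ]
  have harg2 : ∑ i ∈ S, u (Fin.castSuccEmb i) = ∑ i ∈ S, (u ∘ Fin.castSucc) i := rfl
  rw [harg2]
  module

lemma lieSum {V : Type*} [AddCommGroup V] [Module ℂ V] (x : Module.End ℂ V)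
    {ι : Type*} (s : Finset ι) (f : ι → Module.End ℂ V) :
    ⁅x, ∑ i ∈ s, f i⁆ = ∑ i ∈ s, ⁅x, f i⁆ := by
  simp [Ring.lie_def, Finset.mul_sum, Finset.sum_mul, Finset.sum_sub_distrib]

lemma bracket_Delta {V : Type*} [AddCommGroup V] [Module ℂ V]
    (T : ℤ × ℤ → Module.End ℂ V) (hT : IsTFamily T) {k : ℕ} (hk : 2 ≤ k)
    (s r : ℤ × ℤ) (u : Fin k → ℤ × ℤ) :
    ⁅T s, Δ T k r u⁆
      = (Gdet s r : ℂ) • (Δ T k (r + s) u - Δ T k r u)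
        + ∑ i : Fin k, (Gdet s (u i) : ℂ) • Δ T k (r + u i) (Function.update u i s) := by
  classical
  set a : ℂ := (Gdet s r : ℂ) with ha
  set b : Fin k → ℂ := fun i => (Gdet s (u i) : ℂ) with hb
  set g : Finset (Fin k) → Module.End ℂ V :=
    fun S => ((-1 : ℂ) ^ S.card) • (T (r + s + ∑ i ∈ S, u i) - T (r + ∑ i ∈ S, u i)) with hg
  -- Gdet additivity
  have hGadd : ∀ x y : ℤ × ℤ, Gdet s (x + y) = Gdet s x + Gdet s y := by
    intro x y
    simp only [Gdet, Prod.fst_add, Prod.snd_add]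
    ring
  have hGdet : ∀ S : Finset (Fin k), (Gdet s (r + ∑ i ∈ S, u i) : ℂ) = a + ∑ i ∈ S, b i := by
    intro S
    have h1 : Gdet s (r + ∑ i ∈ S, u i) = Gdet s r + ∑ i ∈ S, Gdet s (u i) := by
      rw [hGadd]
      congr 1
      exact map_sum (AddMonoidHom.mk' (Gdet s) (hGadd)) u S
    rw [h1]; push_cast; rfl
  -- expand the bracket
  have expand : ⁅T s, Δ T k r u⁆
      = ∑ S : Finset (Fin k),
          ((a + ∑ i ∈ S, b i) • g S - (((-1 : ℂ) ^ S.card * (a + ∑ i ∈ S, b i)) • T s)) := by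
    rw [Δ, lieSum]
    refine Finset.sum_congr rfl fun S _ => ?_
    rw [Ring.lie_def, mul_smul_comm, smul_mul_assoc, ← smul_sub, ← Ring.lie_def, hT.2, hGdet S]
    have harg : s + (r + ∑ i ∈ S, u i) = r + s + ∑ i ∈ S, u i := by ring
    rw [harg, hg]
    simp only [smul_sub, smul_smul]
    module
  -- alternating sum over all subsets vanishes (k ≥ 1)
  have huniv_ne : (Finset.univ : Finset (Fin k)).Nonempty :=
    ⟨⟨0, by omega⟩, Finset.mem_univ _⟩
  have hvan1 : ∑ S : Finset (Fin k), (-1 : ℂ) ^ S.card = 0 := by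
    rw [← Finset.powerset_univ]; exact altsum _ huniv_ne
  -- alternating sum over subsets containing i vanishes (k ≥ 2)
  have herase_ne : ∀ i : Fin k, ((Finset.univ : Finset (Fin k)).erase i).Nonempty := by
    intro i
    rw [← Finset.card_pos, Finset.card_erase_of_mem (Finset.mem_univ i), Finset.card_univ,
      Fintype.card_fin]
    omega
  have hvan2 : ∀ i : Fin k, ∑ t ∈ ((Finset.univ : Finset (Fin k)).erase i).powerset,
      (-1 : ℂ) ^ t.card = 0 := fun i => altsum _ (herase_ne i)
  -- the coefficient of T s vanishes
  have vanish : ∑ S : Finset (Fin k), ((-1 : ℂ) ^ S.card * (a + ∑ i ∈ S, b i)) = 0 := by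
    have h1 : ∀ S : Finset (Fin k), (-1 : ℂ) ^ S.card * (a + ∑ i ∈ S, b i)
        = (-1 : ℂ) ^ S.card * a + ∑ i : Fin k,
            (if i ∈ S then (-1 : ℂ) ^ S.card * b i else 0) := by
      intro S
      rw [mul_add, Finset.mul_sum]
      congr 1
      rw [Finset.sum_ite_mem, Finset.univ_inter]
    rw [Finset.sum_congr rfl fun S _ => h1 S, Finset.sum_add_distrib, ← Finset.sum_mul,
      hvan1, zero_mul, zero_add, Finset.sum_comm]
    refine Finset.sum_eq_zero fun i _ => ?_
    rw [sum_split i]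
    have : ∀ t ∈ ((Finset.univ : Finset (Fin k)).erase i).powerset,
        ((if i ∈ t then (-1 : ℂ) ^ t.card * b i else 0)
          + (if i ∈ insert i t then (-1 : ℂ) ^ (insert i t).card * b i else 0))
        = ((-1 : ℂ) ^ t.card) * (-(b i)) := by
      intro t ht
      have hit : i ∉ t := fun h =>
        Finset.notMem_erase i _ (Finset.mem_powerset.mp ht h)
      rw [if_neg hit, if_pos (Finset.mem_insert_self i t), zero_add,
        Finset.card_insert_of_notMem hit, pow_succ]
      ring
    rw [Finset.sum_congr rfl this, ← Finset.sum_mul, hvan2 i, zero_mul]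
  rw [expand, Finset.sum_sub_distrib, ← Finset.sum_smul, vanish, zero_smul, sub_zero]
  -- split the main sum
  have hsplit : ∀ S : Finset (Fin k), (a + ∑ i ∈ S, b i) • g S
      = a • g S + ∑ i : Fin k, (if i ∈ S then b i • g S else 0) := by
    intro S
    rw [add_smul, Finset.sum_smul]
    congr 1
    rw [Finset.sum_ite_mem, Finset.univ_inter]
  rw [Finset.sum_congr rfl fun S _ => hsplit S, Finset.sum_add_distrib]
  congr 1
  · -- a-part
    rw [← Finset.smul_sum]
    congr 1
    rw [Δ, Δ, ← Finset.sum_sub_distrib]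
    exact Finset.sum_congr rfl fun S _ => by simp only [hg, smul_sub]
  · -- b-part
    rw [Finset.sum_comm]
    refine Finset.sum_congr rfl fun i _ => ?_
    rw [sum_split i, Δ, sum_split i, Finset.smul_sum]
    refine Finset.sum_congr rfl fun t ht => ?_
    have hit : i ∉ t := fun h =>
      Finset.notMem_erase i _ (Finset.mem_powerset.mp ht h)
    have hupd : ∑ j ∈ t, Function.update u i s j = ∑ j ∈ t, u j :=
      Finset.sum_congr rfl fun j hj =>
        Function.update_of_ne (ne_of_mem_of_not_mem hj hit) s u
    simp only [if_neg hit, if_pos (Finset.mem_insert_self i t), zero_add, hg,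
      Finset.sum_insert hit, Finset.card_insert_of_notMem hit, Function.update_self,
      hupd, pow_succ]
    have harg1 : r + s + (u i + ∑ j ∈ t, u j) = r + u i + (s + ∑ j ∈ t, u j) := by ring
    have harg2 : r + (u i + ∑ j ∈ t, u j) = r + u i + ∑ j ∈ t, u j := by ring
    rw [harg1, harg2]
    module

end Aux

/-- with `𝔍_k` the span of all `k`-th order differences, one has
`𝔍_{k+1} ⊆ 𝔍_k` and `⁅T r, 𝔍_k⁆ ⊆ 𝔍_k` for every `k ≥ 2`. -/
theorem stmt9 {V : Type*} [AddCommGroup V] [Module ℂ V]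
    (T : ℤ × ℤ → Module.End ℂ V) (hT : IsTFamily T)
    (J : ℕ → Submodule ℂ (Module.End ℂ V))
    (hJ : ∀ k : ℕ, J k = Submodule.span ℂ
      {x : Module.End ℂ V | ∃ (r : ℤ × ℤ) (u : Fin k → ℤ × ℤ), x = Δ T k r u}) :
    ∀ k : ℕ, 2 ≤ k →
      J (k + 1) ≤ J k ∧ ∀ r : ℤ × ℤ, ∀ x ∈ J k, ⁅T r, x⁆ ∈ J k := by
  intro k hk
  have hgen : ∀ (r' : ℤ × ℤ) (u : Fin k → ℤ × ℤ), Δ T k r' u ∈ J k := fun r' u => by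
    rw [hJ]; exact Submodule.subset_span ⟨r', u, rfl⟩
  constructor
  · rw [hJ (k + 1)]
    apply Submodule.span_le.mpr
    rintro x ⟨r, u, rfl⟩
    rw [Delta_succ]
    exact sub_mem (hgen r (u ∘ Fin.castSucc)) (hgen (r + u (Fin.last k)) (u ∘ Fin.castSucc))
  · intro rr x hx
    rw [hJ k] at hx
    induction hx using Submodule.span_induction with
    | mem y hy =>
      obtain ⟨r', u, rfl⟩ := hy
      rw [bracket_Delta T hT hk]
      exact add_mem (Submodule.smul_mem _ _ (sub_mem (hgen _ _) (hgen _ _)))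
        (sum_mem fun i _ => Submodule.smul_mem _ _ (hgen _ _))
    | zero => rw [Ring.lie_def, mul_zero, zero_mul, sub_zero]; exact zero_mem _
    | add a b _ _ ha hb => rw [Ring.lie_def, mul_add, add_mul, add_sub_add_comm, ← Ring.lie_def, ← Ring.lie_def]; exact add_mem ha hb
    | smul c a _ ha => rw [Ring.lie_def, mul_smul_comm, smul_mul_assoc, ← smul_sub, ← Ring.lie_def]; exact Submodule.smul_mem _ _ ha
end
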